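/- arXiv:0911.5387 — 5 statements merged into one kernel-verified Lean document; each statement's English description precedes it below -/
import Mathlib

section
/- (Jacobi/Desnanot identity for determinants) Let D be the determinant of an n×n matrix M over a commutative ring (or field), n ≥ 2, and for indices b ≠ c let D[b;b], D[c;c], D[b;c], D[c;b] denote the minors obtained by deleting row b and column b, row c and column c, row b and column c, row c and column b respectively, and D[b,c;b,c] the minor deleting rows b,c and columns b,c. Then D[b;b]·D[c;c] - D[b;c]·D[c;b] = D[b,c;b,c]·D. -/
open Matrix

lemma toBlocks₁₁_map {l m R S : Type*} (f : R → S) (N : Matrix (l ⊕ m) (l ⊕ m) R) :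
    (N.map f).toBlocks₁₁ = N.toBlocks₁₁.map f := rfl

lemma toBlocks₂₂_map {l m R S : Type*} (f : R → S) (N : Matrix (l ⊕ m) (l ⊕ m) R) :
    (N.map f).toBlocks₂₂ = N.toBlocks₂₂.map f := rfl

/-- Field case of Jacobi identity for the top-left `2×2` block of the adjugate. -/
lemma key_field {m : Type*} [Fintype m] [DecidableEq m] {K : Type*} [Field K]
    (N : Matrix (Fin 2 ⊕ m) (Fin 2 ⊕ m) K)
    (hN : N.det ≠ 0) (hD : N.toBlocks₂₂.det ≠ 0) :
    ((adjugate N).toBlocks₁₁).det = N.det * N.toBlocks₂₂.det := by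
  obtain ⟨A, B, C, D, rfl⟩ : ∃ A B C D, N = fromBlocks A B C D :=
    ⟨N.toBlocks₁₁, N.toBlocks₁₂, N.toBlocks₂₁, N.toBlocks₂₂, (fromBlocks_toBlocks N).symm⟩
  rw [toBlocks_fromBlocks₂₂] at hD ⊢
  haveI hDi : Invertible D := D.invertibleOfIsUnitDet (isUnit_iff_ne_zero.mpr hD)
  haveI hNi : Invertible (fromBlocks A B C D) :=
    (fromBlocks A B C D).invertibleOfIsUnitDet (isUnit_iff_ne_zero.mpr hN)
  haveI hSi : Invertible (A - B * ⅟D * C) := invertibleOfFromBlocks₂₂Invertible A B C D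
  have hadj : adjugate (fromBlocks A B C D)
      = (fromBlocks A B C D).det • ⅟(fromBlocks A B C D) := by
    calc adjugate (fromBlocks A B C D)
        = (adjugate (fromBlocks A B C D) * (fromBlocks A B C D)) * ⅟(fromBlocks A B C D) := by
          rw [Matrix.mul_assoc, mul_invOf_self, Matrix.mul_one]
      _ = (fromBlocks A B C D).det • ⅟(fromBlocks A B C D) := by
          rw [adjugate_mul, Matrix.smul_mul, Matrix.one_mul]
  have hinv := invOf_fromBlocks₂₂_eq A B C D
  have h11 : (adjugate (fromBlocks A B C D)).toBlocks₁₁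
      = (fromBlocks A B C D).det • ⅟(A - B * ⅟D * C) := by
    rw [hadj, hinv]
    ext i j
    simp [toBlocks₁₁, fromBlocks]
  have hdetN : (fromBlocks A B C D).det = D.det * (A - B * ⅟D * C).det := det_fromBlocks₂₂ A B C D
  have hS : (A - B * ⅟D * C).det ≠ 0 := by
    intro h; rw [hdetN, h, mul_zero] at hN; exact hN rfl
  have hinvS : (⅟(A - B * ⅟D * C)).det = ((A - B * ⅟D * C).det)⁻¹ := by
    rw [invOf_eq_nonsing_inv, det_nonsing_inv, Ring.inverse_eq_inv]
  rw [h11, det_smul, hinvS, Fintype.card_fin, hdetN, mul_pow,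
    pow_two (A - B * ⅟D * C).det, mul_assoc, mul_assoc, mul_inv_cancel₀ hS, mul_one]
  ring

/-- Jacobi identity for the top-left `2×2` block of the adjugate over a commutative ring. -/
lemma key_ring {m : Type*} [Fintype m] [DecidableEq m] {R : Type*} [CommRing R]
    (N : Matrix (Fin 2 ⊕ m) (Fin 2 ⊕ m) R) :
    ((adjugate N).toBlocks₁₁).det = N.det * N.toBlocks₂₂.det := by
  set P := MvPolynomial ((Fin 2 ⊕ m) × (Fin 2 ⊕ m)) ℤ with hP
  set X : Matrix (Fin 2 ⊕ m) (Fin 2 ⊕ m) P := mvPolynomialX (Fin 2 ⊕ m) (Fin 2 ⊕ m) ℤ with hX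
  have hgen : ((adjugate X).toBlocks₁₁).det = X.det * X.toBlocks₂₂.det := by
    let K := FractionRing P
    have hinj : Function.Injective (algebraMap P K) := IsFractionRing.injective P K
    apply hinj
    have e1 : (algebraMap P K) (((adjugate X).toBlocks₁₁).det)
        = ((adjugate (X.map (algebraMap P K))).toBlocks₁₁).det := by
      rw [RingHom.map_det, RingHom.mapMatrix_apply, ← toBlocks₁₁_map, ← RingHom.mapMatrix_apply,
        RingHom.map_adjugate, RingHom.mapMatrix_apply]
    have e2 : (algebraMap P K) (X.det) = (X.map (algebraMap P K)).det := by
      rw [RingHom.map_det, RingHom.mapMatrix_apply]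
    have e3 : (algebraMap P K) (X.toBlocks₂₂.det) = (X.map (algebraMap P K)).toBlocks₂₂.det := by
      rw [RingHom.map_det, RingHom.mapMatrix_apply, ← toBlocks₂₂_map]
    have hD0 : X.toBlocks₂₂.det ≠ 0 := by
      set g : m × m → (Fin 2 ⊕ m) × (Fin 2 ⊕ m) :=
        fun p => ((Sum.inr p.1 : Fin 2 ⊕ m), (Sum.inr p.2 : Fin 2 ⊕ m)) with hg
      have ginj : Function.Injective g := fun p q hpq => by
        simpa [hg, Prod.ext_iff] using hpq
      have hren : X.toBlocks₂₂ = (mvPolynomialX m m ℤ).map (MvPolynomial.rename g) := by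
        ext i j
        simp [hX, mvPolynomialX_apply, toBlocks₂₂, hg]
      have hgdet : (MvPolynomial.rename g) ((mvPolynomialX m m ℤ).det)
          = ((mvPolynomialX m m ℤ).map (MvPolynomial.rename g)).det := by
        rw [AlgHom.map_det, AlgHom.mapMatrix_apply]
      intro h
      have h0 : (MvPolynomial.rename g) ((mvPolynomialX m m ℤ).det)
          = (MvPolynomial.rename g) 0 := by
        rw [map_zero, hgdet, ← hren, h]
      exact det_mvPolynomialX_ne_zero m ℤ (MvPolynomial.rename_injective g ginj h0)
    have hN0 : (X.map (algebraMap P K)).det ≠ 0 := by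
      rw [← e2]
      simp only [ne_eq, map_eq_zero_iff _ hinj]
      exact det_mvPolynomialX_ne_zero _ ℤ
    have hD0' : (X.map (algebraMap P K)).toBlocks₂₂.det ≠ 0 := by
      rw [← e3]
      simp only [ne_eq, map_eq_zero_iff _ hinj]
      exact hD0
    rw [_root_.map_mul, e1, e2, e3]
    exact key_field _ hN0 hD0'
  let φ : P →+* R := MvPolynomial.eval₂Hom (Int.castRingHom R) fun p => N p.1 p.2
  have hNX : X.map φ = N := mvPolynomialX_map_eval₂ (Int.castRingHom R) N
  have h := congrArg φ hgen
  rw [_root_.map_mul, RingHom.map_det, RingHom.mapMatrix_apply, ← toBlocks₁₁_map,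
    ← RingHom.mapMatrix_apply, RingHom.map_adjugate, RingHom.mapMatrix_apply,
    RingHom.map_det, RingHom.mapMatrix_apply, RingHom.map_det, RingHom.mapMatrix_apply,
    ← toBlocks₂₂_map, hNX] at h
  exact h

/-- Jacobi/Desnanot identity: for an `(n+2)×(n+2)` matrix `M` over a
commutative ring and distinct indices `b ≠ c`, writing minors as determinants of
submatrices obtained by deleting the indicated rows and columns (via `Fin.succAbove`),
`D[b;b]·D[c;c] - D[b;c]·D[c;b] = D[b,c;b,c]·D`.  Here `k : Fin (n+1)` with
`b.succAbove k = c` encodes the position of row/column `c` after deleting `b`, so that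
`b.succAbove ∘ k.succAbove` deletes both `b` and `c`. -/
theorem stmt4 {R : Type*} [CommRing R] (n : ℕ)
    (M : Matrix (Fin (n + 2)) (Fin (n + 2)) R)
    (b c : Fin (n + 2)) (hbc : b ≠ c)
    (k : Fin (n + 1)) (hk : b.succAbove k = c) :
    (M.submatrix b.succAbove b.succAbove).det * (M.submatrix c.succAbove c.succAbove).det
      - (M.submatrix b.succAbove c.succAbove).det * (M.submatrix c.succAbove b.succAbove).det
    = (M.submatrix (b.succAbove ∘ k.succAbove) (b.succAbove ∘ k.succAbove)).det * M.det := by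
  classical
  set g : Fin 2 ⊕ Fin n → Fin (n + 2) :=
    Sum.elim ![b, c] (fun j => b.succAbove (k.succAbove j)) with hg
  have hgb : g (Sum.inl 0) = b := rfl
  have hgc : g (Sum.inl 1) = c := rfl
  have hbij : Function.Bijective g := by
    rw [Fintype.bijective_iff_injective_and_card]
    constructor
    · rintro (i | i) (j | j) h
      · simp only [hg, Sum.elim_inl] at h
        congr 1
        fin_cases i <;> fin_cases j <;> simp_all
      · exfalso
        simp only [hg, Sum.elim_inl, Sum.elim_inr] at h
        fin_cases i
        · simp only [Matrix.cons_val_zero] at h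
          exact (Fin.succAbove_ne b (k.succAbove j)) h.symm
        · simp only [Matrix.cons_val_one, Matrix.head_cons] at h
          rw [← hk] at h
          exact (Fin.succAbove_ne k j) (Fin.succAbove_right_injective h).symm
      · exfalso
        simp only [hg, Sum.elim_inl, Sum.elim_inr] at h
        fin_cases j
        · simp only [Matrix.cons_val_zero] at h
          exact (Fin.succAbove_ne b (k.succAbove i)) h
        · simp only [Matrix.cons_val_one, Matrix.head_cons] at h
          rw [← hk] at h
          exact (Fin.succAbove_ne k i) (Fin.succAbove_right_injective h)
      · simp only [hg, Sum.elim_inr] at h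
        congr 1
        exact Fin.succAbove_right_injective (Fin.succAbove_right_injective h)
    · simp only [Fintype.card_sum, Fintype.card_fin]
      omega
  set e : Fin 2 ⊕ Fin n ≃ Fin (n + 2) := Equiv.ofBijective g hbij with he
  set N : Matrix (Fin 2 ⊕ Fin n) (Fin 2 ⊕ Fin n) R := M.submatrix e e with hN
  have h := key_ring N
  have hdet : N.det = M.det := det_submatrix_equiv_self e M
  have h22 : N.toBlocks₂₂
      = M.submatrix (b.succAbove ∘ k.succAbove) (b.succAbove ∘ k.succAbove) := rfl
  have hadjN : adjugate N = (adjugate M).submatrix e e := adjugate_submatrix_equiv_self e M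
  have h11 : (adjugate N).toBlocks₁₁
      = !![adjugate M b b, adjugate M b c; adjugate M c b, adjugate M c c] := by
    rw [hadjN]
    ext i j
    fin_cases i <;> fin_cases j <;>
      simp [toBlocks₁₁, he, hg, Equiv.ofBijective]
  rw [h11, hdet, h22, det_fin_two_of] at h
  have hbb : adjugate M b b = (M.submatrix b.succAbove b.succAbove).det := by
    rw [adjugate_fin_succ_eq_det_submatrix, Even.neg_one_pow ⟨(b : ℕ), rfl⟩, one_mul]
  have hcc : adjugate M c c = (M.submatrix c.succAbove c.succAbove).det := by
    rw [adjugate_fin_succ_eq_det_submatrix, Even.neg_one_pow ⟨(c : ℕ), rfl⟩, one_mul]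
  have hcross : adjugate M b c * adjugate M c b
      = (M.submatrix c.succAbove b.succAbove).det * (M.submatrix b.succAbove c.succAbove).det := by
    rw [adjugate_fin_succ_eq_det_submatrix, adjugate_fin_succ_eq_det_submatrix]
    have hsgn : ((-1 : R)) ^ ((c : ℕ) + b) * ((-1 : R)) ^ ((b : ℕ) + c) = 1 := by
      rw [← pow_add]
      exact Even.neg_one_pow ⟨(b : ℕ) + c, by ring⟩
    calc ((-1 : R)) ^ ((c : ℕ) + b) * (M.submatrix c.succAbove b.succAbove).det *
          (((-1 : R)) ^ ((b : ℕ) + c) * (M.submatrix b.succAbove c.succAbove).det)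
        = (((-1 : R)) ^ ((c : ℕ) + b) * ((-1 : R)) ^ ((b : ℕ) + c)) *
            ((M.submatrix c.succAbove b.succAbove).det *
              (M.submatrix b.succAbove c.succAbove).det) := by ring
      _ = _ := by rw [hsgn, one_mul]
  rw [hbb, hcc, hcross] at h
  linear_combination h
end

section
/- There exists no admissible tableau on a rectangular Young diagram with r+2 rows and s+2 columns with entries from the totally ordered set J = J₊ ∪ J₋ where |J₊| = r+1 and |J₋| = s+1, under the admissibility conditions: entries weakly increase along rows and columns, entries from J₊ strictly increase down columns, and entries from J₋ strictly increase along rows. -/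
/-!
The corner entry `b 0 0` is the smallest entry of an admissible tableau. If it lies in `J₊`, it
cannot occur below the first row (it would sit under an equal `J₊`-entry), so deleting the first
row leaves an admissible tableau with one row fewer over `J₊ \ {b 0 0}`; if it lies in `J₋`,
transpose. Inducting, an admissible tableau with `m + 1` rows and `n + 1` columns forces
`m < |J₊|` or `n < |J₋|`, which fails for `m = r + 1`, `n = s + 1`.
-/

open Finset

variable {α : Type*} [LinearOrder α]

structure IsAdmissible (P M : Finset α) {m n : ℕ} (b : Fin (m + 1) → Fin (n + 1) → α) : Prop where
  mem : ∀ i j, b i j ∈ P ∪ M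
  row_mono : ∀ i, Monotone (b i)
  col_mono : ∀ j, Monotone fun i => b i j
  col_strict : ∀ (i : Fin m) j,
    b i.castSucc j ∈ P → b i.succ j ∈ P → b i.castSucc j < b i.succ j
  row_strict : ∀ i (j : Fin n),
    b i j.castSucc ∈ M → b i j.succ ∈ M → b i j.castSucc < b i j.succ

namespace IsAdmissible

variable {P M : Finset α} {m n : ℕ}

section

variable {b : Fin (m + 1) → Fin (n + 1) → α}

theorem transpose (h : IsAdmissible P M b) : IsAdmissible M P fun j i => b i j where
  mem j i := union_comm P M ▸ h.mem i j
  row_mono := h.col_mono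
  col_mono := h.row_mono
  col_strict j i := h.row_strict i j
  row_strict j i := h.col_strict i j

theorem corner_le (h : IsAdmissible P M b) (i j) : b 0 0 ≤ b i j :=
  (h.col_mono 0 (Fin.zero_le i)).trans (h.row_mono i (Fin.zero_le j))

end

section

variable {b : Fin (m + 2) → Fin (n + 1) → α}

theorem succ_ne_corner (h : IsAdmissible P M b) (hP : b 0 0 ∈ P) (i : Fin (m + 1)) (j) :
    b i.succ j ≠ b 0 0 := by
  intro hsucc
  have hcast : b i.castSucc j = b 0 0 :=
    le_antisymm (hsucc ▸ h.col_mono j Fin.castSucc_lt_succ.le) (h.corner_le _ _)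
  have := h.col_strict i j (hcast ▸ hP) (hsucc ▸ hP)
  rw [hcast, hsucc] at this
  exact this.false

theorem tail (h : IsAdmissible P M b) (hP : b 0 0 ∈ P) :
    IsAdmissible (P.erase (b 0 0)) M fun i => b i.succ where
  mem i j := by
    rcases mem_union.mp (h.mem i.succ j) with hi | hi
    · exact mem_union_left _ (mem_erase.mpr ⟨h.succ_ne_corner hP i j, hi⟩)
    · exact mem_union_right _ hi
  row_mono i := h.row_mono i.succ
  col_mono j := (h.col_mono j).comp Fin.strictMono_succ.monotone
  col_strict i j hi hi' := by
    simpa only [Fin.succ_castSucc] using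
      h.col_strict i.succ j (mem_of_mem_erase hi) (mem_of_mem_erase hi')
  row_strict i := h.row_strict i.succ

end

theorem lt_card_or_lt_card {b : Fin (m + 1) → Fin (n + 1) → α} (h : IsAdmissible P M b) :
    m < #P ∨ n < #M := by
  induction hk : m + n using Nat.strong_induction_on generalizing m n P M b with
  | _ k ih =>
  rcases mem_union.mp (h.mem 0 0) with hP | hM
  · cases m with
    | zero => exact Or.inl (card_pos.mpr ⟨_, hP⟩)
    | succ m =>
      have := ih (m + n) (by omega) (h.tail hP) rfl
      rw [card_erase_of_mem hP] at this
      omega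
  · cases n with
    | zero => exact Or.inr (card_pos.mpr ⟨_, hM⟩)
    | succ n =>
      have := ih (n + m) (by omega) (h.transpose.tail hM) rfl
      rw [card_erase_of_mem hM] at this
      omega

end IsAdmissible

theorem stmt7_general (r s : ℕ)
    (Jp Jm : Finset (Fin (r + s + 2)))
    (hunion : Jp ∪ Jm = Finset.univ)
    (hcp : Jp.card = r + 1) (hcm : Jm.card = s + 1) :
    ¬ ∃ b : Fin (r + 2) → Fin (s + 2) → Fin (r + s + 2),
      (∀ i : Fin (r + 2), Monotone (b i)) ∧
      (∀ j : Fin (s + 2), Monotone (fun i => b i j)) ∧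
      (∀ (i : Fin (r + 1)) (j : Fin (s + 2)),
        b i.castSucc j ∈ Jp → b i.succ j ∈ Jp → b i.castSucc j < b i.succ j) ∧
      (∀ (i : Fin (r + 2)) (j : Fin (s + 1)),
        b i j.castSucc ∈ Jm → b i j.succ ∈ Jm → b i j.castSucc < b i j.succ) := by
  rintro ⟨b, hrow, hcol, hvert, hhor⟩
  have hb : IsAdmissible Jp Jm b :=
    ⟨fun i j => hunion ▸ mem_univ (b i j), hrow, hcol, hvert, hhor⟩
  have := hb.lt_card_or_lt_card
  omega

/-- there is no admissible tableau on the rectangular Young diagram with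
`r+2` rows and `s+2` columns with entries in the totally ordered set
`J = J₊ ∪ J₋` (`|J₊| = r+1`, `|J₋| = s+1`), where admissibility means: entries weakly
increase along rows and down columns, vertically adjacent `J₊`-entries strictly
increase, and horizontally adjacent `J₋`-entries strictly increase. -/
theorem stmt7 (r s : ℕ)
    (Jp Jm : Finset (Fin (r + s + 2)))
    (hdisj : Disjoint Jp Jm)
    (hunion : Jp ∪ Jm = Finset.univ)
    (hcp : Jp.card = r + 1) (hcm : Jm.card = s + 1) :
    ¬ ∃ b : Fin (r + 2) → Fin (s + 2) → Fin (r + s + 2),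
      (∀ i : Fin (r + 2), Monotone (b i)) ∧
      (∀ j : Fin (s + 2), Monotone (fun i => b i j)) ∧
      (∀ (i : Fin (r + 1)) (j : Fin (s + 2)),
        b i.castSucc j ∈ Jp → b i.succ j ∈ Jp → b i.castSucc j < b i.succ j) ∧
      (∀ (i : Fin (r + 2)) (j : Fin (s + 1)),
        b i j.castSucc ∈ Jm → b i j.succ ∈ Jm → b i j.castSucc < b i j.succ) :=
  stmt7_general r s Jp Jm hunion hcp hcm
end

section
/- For any skew Young diagram λ ⊂ μ that contains a rectangular subdiagram with r+2 rows and s+2 columns, the set of admissible tableaux B(λ ⊂ μ) is empty, where admissibility is with respect to J = J₊ ∪ J₋, |J₊| = r+1, |J₋| = s+1. -/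
/-!
Write `A`, `B` for `J₊`, `J₋` and restrict the tableau to the rectangle. Let `M` be the largest
element of `A ∪ B`. If `M ∈ A`, then `M` cannot occur above the last row:
the entry below it would be `≥ M`, hence equal to `M`, and two vertically adjacent copies of an
`A`-entry are forbidden. Deleting the last row and removing `M` from `A` therefore leaves an
admissible filling of a smaller rectangle, one row shorter and with `A` one element smaller; the
case `M ∈ B` is the transpose. The induction ends at a `1 × 1` rectangle with `A ∪ B = ∅`, which
has no filling at all.
-/

open Finset

variable {α : Type*} [LinearOrder α]

/-- `p` and `q` are the last row and column indices: the rectangle has `p + 1` rows and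
`q + 1` columns. -/
structure IsAdmissibleFilling (A B : Finset α) (p q : ℕ) (f : ℕ → ℕ → α) : Prop where
  mem : ∀ i ≤ p, ∀ j ≤ q, f i j ∈ A ∪ B
  le_right : ∀ i ≤ p, ∀ j < q, f i j ≤ f i (j + 1)
  le_down : ∀ i < p, ∀ j ≤ q, f i j ≤ f (i + 1) j
  lt_down : ∀ i < p, ∀ j ≤ q, f i j ∈ A → f (i + 1) j ∈ A → f i j < f (i + 1) j
  lt_right : ∀ i ≤ p, ∀ j < q, f i j ∈ B → f i (j + 1) ∈ B → f i j < f i (j + 1)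

namespace IsAdmissibleFilling

variable {A B : Finset α} {p q : ℕ} {f : ℕ → ℕ → α}

theorem transpose (hf : IsAdmissibleFilling A B p q f) :
    IsAdmissibleFilling B A q p (fun i j => f j i) where
  mem i hi j hj := union_comm A B ▸ hf.mem j hj i hi
  le_right i hi j hj := hf.le_down j hj i hi
  le_down i hi j hj := hf.le_right j hj i hi
  lt_down i hi j hj := hf.lt_right j hj i hi
  lt_right i hi j hj := hf.lt_down j hj i hi

theorem ne_of_upperBound_mem_left (hf : IsAdmissibleFilling A B (p + 1) q f) {M : α}
    (hM : ∀ x ∈ A ∪ B, x ≤ M) (hMA : M ∈ A) {i j : ℕ} (hi : i ≤ p) (hj : j ≤ q) :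
    f i j ≠ M := by
  intro hij
  have hbelow : f (i + 1) j = M :=
    le_antisymm (hM _ (hf.mem _ (by omega) j hj)) (hij ▸ hf.le_down i (by omega) j hj)
  exact (hf.lt_down i (by omega) j hj (hij ▸ hMA) (hbelow ▸ hMA)).ne (hij.trans hbelow.symm)

theorem erase_left (hf : IsAdmissibleFilling A B (p + 1) q f) {M : α}
    (hM : ∀ x ∈ A ∪ B, x ≤ M) (hMA : M ∈ A) :
    IsAdmissibleFilling (A.erase M) B p q f where
  mem i hi j hj := by
    rcases mem_union.mp (hf.mem i (by omega) j hj) with hA | hB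
    · exact mem_union_left _
        (mem_erase.mpr ⟨hf.ne_of_upperBound_mem_left hM hMA hi hj, hA⟩)
    · exact mem_union_right _ hB
  le_right i hi j hj := hf.le_right i (by omega) j hj
  le_down i hi j hj := hf.le_down i (by omega) j hj
  lt_down i hi j hj h h' :=
    hf.lt_down i (by omega) j hj (mem_of_mem_erase h) (mem_of_mem_erase h')
  lt_right i hi j hj := hf.lt_right i (by omega) j hj

end IsAdmissibleFilling

theorem not_isAdmissibleFilling (A B : Finset α) (f : ℕ → ℕ → α) :
    ¬ IsAdmissibleFilling A B #A #B f := by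
  induction hn : #A + #B using Nat.strong_induction_on generalizing A B f with
  | _ n ih =>
  intro hf
  obtain hempty | hne := (A ∪ B).eq_empty_or_nonempty
  · simpa [hempty] using hf.mem 0 (Nat.zero_le _) 0 (Nat.zero_le _)
  have hM : ∀ x ∈ A ∪ B, x ≤ (A ∪ B).max' hne := fun x hx => (A ∪ B).le_max' x hx
  rcases mem_union.mp ((A ∪ B).max'_mem hne) with hMA | hMB
  · have hcard := card_erase_add_one hMA
    rw [← hcard] at hf
    exact ih _ (by omega) (A.erase _) B f rfl (hf.erase_left hM hMA)
  · have hcard := card_erase_add_one hMB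
    have hft := hf.transpose
    rw [← hcard] at hft
    exact ih _ (by omega) (B.erase _) A _ rfl (hft.erase_left (union_comm A B ▸ hM) hMB)

theorem stmt8_general (r s : ℕ)
    (Jp Jm : Finset (Fin (r + s + 2)))
    (hunion : Jp ∪ Jm = Finset.univ)
    (hcp : Jp.card = r + 1) (hcm : Jm.card = s + 1)
    (cell : ℕ → ℕ → Prop)
    (i₀ j₀ : ℕ)
    (hrect : ∀ i ≤ r + 1, ∀ j ≤ s + 1, cell (i₀ + i) (j₀ + j)) :
    ¬ ∃ b : ℕ → ℕ → Fin (r + s + 2),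
      (∀ i j, cell i j → cell i (j + 1) → b i j ≤ b i (j + 1)) ∧
      (∀ i j, cell i j → cell (i + 1) j → b i j ≤ b (i + 1) j) ∧
      (∀ i j, cell i j → cell (i + 1) j →
        b i j ∈ Jp → b (i + 1) j ∈ Jp → b i j < b (i + 1) j) ∧
      (∀ i j, cell i j → cell i (j + 1) →
        b i j ∈ Jm → b i (j + 1) ∈ Jm → b i j < b i (j + 1)) := by
  rintro ⟨b, hright, hdown, hdownJp, hrightJm⟩
  refine not_isAdmissibleFilling Jp Jm (fun i j => b (i₀ + i) (j₀ + j)) ?_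
  rw [hcp, hcm]
  exact
    { mem := fun i _ j _ => hunion ▸ mem_univ _
      le_right := fun i hi j hj => hright _ _ (hrect i hi j (by omega)) (hrect i hi (j + 1) hj)
      le_down := fun i hi j hj => hdown _ _ (hrect i (by omega) j hj) (hrect (i + 1) hi j hj)
      lt_down := fun i hi j hj =>
        hdownJp _ _ (hrect i (by omega) j hj) (hrect (i + 1) hi j hj)
      lt_right := fun i hi j hj =>
        hrightJm _ _ (hrect i hi j (by omega)) (hrect i hi (j + 1) hj) }

/-- for a skew Young diagram `λ ⊂ μ` (cells in row `i` are the columns `j`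
with `lam i < j ≤ mu i`, for antitone `lam ≤ mu`) containing an `(r+2)×(s+2)`
rectangular subdiagram, the set of admissible tableaux is empty: there is no assignment
`b` of entries from `J = J₊ ∪ J₋` (`|J₊| = r+1`, `|J₋| = s+1`) to the cells such that
entries weakly increase along rows and columns, vertically adjacent `J₊`-entries
strictly increase, and horizontally adjacent `J₋`-entries strictly increase. -/
theorem stmt8 (r s : ℕ)
    (Jp Jm : Finset (Fin (r + s + 2)))
    (hdisj : Disjoint Jp Jm)
    (hunion : Jp ∪ Jm = Finset.univ)
    (hcp : Jp.card = r + 1) (hcm : Jm.card = s + 1)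
    (lam mu : ℕ → ℕ) (hlam : Antitone lam) (hmu : Antitone mu) (hle : lam ≤ mu)
    (cell : ℕ → ℕ → Prop)
    (hcell : ∀ i j, cell i j ↔ lam i < j ∧ j ≤ mu i)
    (i₀ j₀ : ℕ)
    (hrect : ∀ i ≤ r + 1, ∀ j ≤ s + 1, cell (i₀ + i) (j₀ + j)) :
    ¬ ∃ b : ℕ → ℕ → Fin (r + s + 2),
      (∀ i j, cell i j → cell i (j + 1) → b i j ≤ b i (j + 1)) ∧
      (∀ i j, cell i j → cell (i + 1) j → b i j ≤ b (i + 1) j) ∧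
      (∀ i j, cell i j → cell (i + 1) j →
        b i j ∈ Jp → b (i + 1) j ∈ Jp → b i j < b (i + 1) j) ∧
      (∀ i j, cell i j → cell i (j + 1) →
        b i j ∈ Jm → b i (j + 1) ∈ Jm → b i j < b i (j + 1)) :=
  stmt8_general r s Jp Jm hunion hcp hcm cell i₀ j₀ hrect
end

section
/- For the supersymmetric elementary functions e_a with generating series Π_{i=1}^{r+1}(1+x_iX)/Π_{j=1}^{s+1}(1-y_jX), one has e_a ≠ 0 possibly for all a ≥ 0 (no vanishing for large a when s ≥ 0), but the hook Schur function s_μ = det(e_{μ'_i - i + j}) vanishes whenever the partition μ contains the cell (r+2, s+2), i.e., whenever μ_{r+2} ≥ s+2. -/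
/-!
Clearing denominators, `E(X) · ∏ⱼ (1 - yⱼX)` is a polynomial of degree `r + 1`, so the `e_a`
(extended by `0` to negative indices) satisfy, for `a ≥ r + 2`, a linear recurrence of order
`s + 1` with leading coefficient `1`. If `μ_{r+2} ≥ s + 2` then `μ'_i ≥ r + 2` for `i ≤ s + 1`,
so each of the first `s + 2` rows `j ↦ e_{μ'_i - i + j}` is the start of a sequence that obeys
this recurrence from its `(s + 1)`-st term on. Such a sequence is determined by its first `s + 1`
terms, hence these `s + 2` rows are linearly dependent and the determinant vanishes.
-/

open Finset PowerSeries

section Recurrence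

variable {R : Type*} [CommRing R]

theorem coeff_prod_one_add_C_mul_X_eq_zero {ι : Type*} [DecidableEq ι] (F : Finset ι)
    (c : ι → R) {k : ℕ} (hk : #F < k) :
    coeff k (∏ j ∈ F, (1 + C (c j) * X)) = 0 := by
  induction F using Finset.induction generalizing k with
  | empty => rw [prod_empty, coeff_one, if_neg (by simp at hk; omega)]
  | insert a F ha ih =>
    rw [card_insert_of_notMem ha] at hk
    obtain ⟨k, rfl⟩ : ∃ k', k = k' + 1 := ⟨k - 1, by omega⟩
    rw [prod_insert ha, add_mul, one_mul, mul_assoc, map_add, coeff_C_mul, coeff_succ_X_mul,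
      ih (by omega), ih (by omega), mul_zero, add_zero]

def extendByZero (e : ℕ → R) (z : ℤ) : R := if 0 ≤ z then e z.toNat else 0

@[simp]
theorem extendByZero_natCast (e : ℕ → R) (n : ℕ) : extendByZero e n = e n := by
  simp [extendByZero]

theorem extendByZero_of_neg (e : ℕ → R) {z : ℤ} (hz : z < 0) : extendByZero e z = 0 :=
  if_neg (by omega)

theorem sum_coeff_mul_extendByZero_eq_zero (e : ℕ → R) {D P : R⟦X⟧} (hDP : mk e * D = P)
    {d n : ℕ} (hD : ∀ k, d < k → coeff k D = 0) (hP : coeff n P = 0) :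
    ∑ k ∈ range (d + 1), coeff k D * extendByZero e (n - k) = 0 := by
  have hcoeff : ∑ k ∈ range (n + 1), coeff k D * e (n - k) = 0 := by
    rw [← hP, ← hDP, mul_comm, coeff_mul,
      Nat.sum_antidiagonal_eq_sum_range_succ fun i j => coeff i D * coeff j (mk e)]
    simp only [coeff_mk]
  rw [← hcoeff]
  trans ∑ k ∈ range (d + n + 1), coeff k D * extendByZero e (n - k)
  · refine sum_subset (range_subset_range.2 (by omega)) fun k hk hkd => ?_
    rw [hD k (by simp at hk hkd; omega), zero_mul]
  · refine (sum_subset_zero_on_sdiff (range_subset_range.2 (by omega)) (fun k hk => ?_)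
      fun k hk => ?_).symm
    · rw [extendByZero_of_neg _ (by simp at hk; omega), mul_zero]
    · rw [← Nat.cast_sub (by simp at hk; omega), extendByZero_natCast]

theorem eq_zero_of_recurrence {n : ℕ} {σ : ℕ → R} (hσ0 : σ 0 = 1) {g : ℕ → R}
    (hg : ∀ a, n + 1 ≤ a → ∑ k ∈ range (n + 2), σ k * g (a - k) = 0)
    (hinit : ∀ a ≤ n, g a = 0) :
    g = 0 := by
  refine funext fun a => ?_
  induction a using Nat.strong_induction_on with
  | _ a ih =>
    simp only [Pi.zero_apply] at ih ⊢
    rcases le_or_gt a n with ha | ha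
    · exact hinit a ha
    · have h := hg a ha
      rw [sum_range_succ', sum_eq_zero fun k _ => by rw [ih (a - (k + 1)) (by omega), mul_zero],
        zero_add, hσ0, one_mul, Nat.sub_zero] at h
      exact h

theorem not_linearIndependent_of_recurrence [Nontrivial R] {n : ℕ} {σ : ℕ → R} (hσ0 : σ 0 = 1)
    (f : Fin (n + 2) → ℕ → R)
    (hf : ∀ i a, n + 1 ≤ a → ∑ k ∈ range (n + 2), σ k * f i (a - k) = 0) :
    ¬ LinearIndependent R f := by
  intro hli
  -- `n + 2` vectors in `R^(n+1)` are dependent: commutative rings have the strong rank condition.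
  have hinit : ¬ LinearIndependent R fun i (t : Fin (n + 1)) => f i t := fun h => by
    simpa using h.fintype_card_le_finrank
  obtain ⟨lam, hlam, i, hi⟩ := Fintype.not_linearIndependent_iff.mp hinit
  refine hi (Fintype.linearIndependent_iff.mp hli lam
    (eq_zero_of_recurrence (n := n) hσ0 (fun a ha => ?_) fun a ha => ?_) i)
  · simp only [Finset.sum_apply, Pi.smul_apply, smul_eq_mul, mul_sum]
    rw [sum_comm]
    refine sum_eq_zero fun j _ => ?_
    simp_rw [mul_left_comm (σ _), ← mul_sum, hf j a ha, mul_zero]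
  · simpa using congrFun hlam ⟨a, by omega⟩

end Recurrence

theorem le_card_filter_lt_of_antitone {mu : ℕ → ℕ} (hmu : Antitone mu) {N : ℕ}
    (hN : ∀ i, N ≤ i → mu i = 0) {j p : ℕ} (hj : j < mu p) :
    p + 1 ≤ #{k ∈ range N | j < mu k} := by
  calc p + 1 = #(range (p + 1)) := (card_range _).symm
  _ ≤ _ := card_le_card fun k hk => by
      have hk : k ≤ p := by simpa [Nat.lt_succ_iff] using hk
      have hpk := hmu hk
      have hkN : k < N := by
        by_contra h
        have := hN k (by omega)
        omega
      simp only [mem_filter, mem_range]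
      omega

theorem stmt14_general (r s : ℕ)
    (e : ℕ → MvPolynomial (Fin (r + 1) ⊕ Fin (s + 1)) ℚ)
    (hE : (PowerSeries.mk e) *
        ∏ j : Fin (s + 1),
          (1 - PowerSeries.C (MvPolynomial.X (Sum.inr j)) * PowerSeries.X) =
      ∏ i : Fin (r + 1),
          (1 + PowerSeries.C (MvPolynomial.X (Sum.inl i)) * PowerSeries.X))
    (N : ℕ) (mu : ℕ → ℕ) (hmu : Antitone mu) (hN : ∀ i, N ≤ i → mu i = 0)
    (conj : ℕ → ℕ)
    (hconj : ∀ j, conj j = ((Finset.range N).filter fun k => j < mu k).card)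
    (hhook : s + 2 ≤ mu (r + 1)) :
    (Matrix.of fun i j : Fin (mu 0) =>
        if 0 ≤ (conj i : ℤ) - (i : ℤ) + (j : ℤ) then
          e ((conj i : ℤ) - (i : ℤ) + (j : ℤ)).toNat else 0).det = 0 := by
  set D : (MvPolynomial (Fin (r + 1) ⊕ Fin (s + 1)) ℚ)⟦X⟧ :=
    ∏ j : Fin (s + 1), (1 - C (MvPolynomial.X (Sum.inr j)) * X) with hD
  have hD0 : coeff 0 D = 1 := by simp [hD]
  have hD_eq_zero : ∀ k, s + 1 < k → coeff k D = 0 := fun k hk => by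
    simpa [hD, sub_eq_add_neg, ← neg_mul, ← map_neg] using
      coeff_prod_one_add_C_mul_X_eq_zero univ (fun j => -MvPolynomial.X (Sum.inr j)) (k := k)
        (by simpa)
  have hconj_ge : ∀ i ≤ s + 1, r + 2 ≤ conj i := fun i hi => by
    rw [hconj]
    exact le_card_filter_lt_of_antitone hmu hN (by omega)
  set f : Fin (s + 2) → ℕ → MvPolynomial (Fin (r + 1) ⊕ Fin (s + 1)) ℚ :=
    fun i a => extendByZero e ((conj i : ℤ) - i + a) with hf_def
  have hf : ∀ i a, s + 1 ≤ a → ∑ k ∈ range (s + 2), coeff k D * f i (a - k) = 0 := by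
    intro i a ha
    have hi := hconj_ge i (by omega)
    obtain ⟨n, hn⟩ : ∃ n : ℕ, (conj i : ℤ) - i + a = n :=
      ⟨_, (Int.toNat_of_nonneg (by omega)).symm⟩
    convert sum_coeff_mul_extendByZero_eq_zero e hE hD_eq_zero (n := n)
      (coeff_prod_one_add_C_mul_X_eq_zero _ _ (by simp; omega)) using 3 with k hk
    simp only [mem_range] at hk
    simp only [hf_def]
    congr 1
    omega
  have hmu0 : s + 2 ≤ mu 0 := hhook.trans (hmu (Nat.zero_le _))
  refine Matrix.det_eq_zero_of_not_linearIndependent_rows fun hrows =>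
    not_linearIndependent_of_recurrence hD0 f hf ?_
  refine LinearIndependent.of_comp (LinearMap.funLeft _ _ fun j : Fin (mu 0) => (j : ℕ)) ?_
  convert hrows.comp (Fin.castLE hmu0) (Fin.castLE_injective _)
  rfl

/-- over `ℚ[x_1,…,x_{r+1},y_1,…,y_{s+1}]`, with the supersymmetric
elementary functions `e_a` defined by `E(X) = Π(1+x_iX)/Π(1-y_jX)` (denominators
cleared), the hook Schur function `s_μ = det_{1≤i,j≤μ₁}(e_{μ'_i-i+j})` vanishes
whenever the partition `mu` contains the cell `(r+2,s+2)`, i.e. `μ_{r+2} ≥ s+2`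
(0-indexed: `mu (r+1) ≥ s+2`). -/
theorem stmt14 (r s : ℕ)
    (e : ℕ → MvPolynomial (Fin (r + 1) ⊕ Fin (s + 1)) ℚ)
    (he0 : e 0 = 1)
    (hE : (PowerSeries.mk e) *
        ∏ j : Fin (s + 1),
          (1 - PowerSeries.C (MvPolynomial.X (Sum.inr j)) * PowerSeries.X) =
      ∏ i : Fin (r + 1),
          (1 + PowerSeries.C (MvPolynomial.X (Sum.inl i)) * PowerSeries.X))
    (N : ℕ) (mu : ℕ → ℕ) (hmu : Antitone mu) (hN : ∀ i, N ≤ i → mu i = 0)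
    (conj : ℕ → ℕ)
    (hconj : ∀ j, conj j = ((Finset.range N).filter fun k => j < mu k).card)
    (hhook : s + 2 ≤ mu (r + 1)) :
    (Matrix.of fun i j : Fin (mu 0) =>
        if 0 ≤ (conj i : ℤ) - (i : ℤ) + (j : ℤ) then
          e ((conj i : ℤ) - (i : ℤ) + (j : ℤ)).toNat else 0).det = 0 :=
  stmt14_general r s e hE N mu hmu hN conj hconj hhook
end

section
/- For n ≥ 1, if two families (T^a) and (T_m) of functions ℤ→F satisfy T^0 = T_0 = 1 and the convolution identity Σ_{k=0}^{n} (-1)^k T^{k}(u + 2n - k - 1)·T_{n-k}(u + n - k - 1) = 0 for all n ≥ 1 and all u, then each T_n is uniquely determined by (T^1,…,T^n) and equals the n×n determinant T_n(u+n-1) = det_{1≤i,j≤n}( T^{1 + j - i}(shift_{ij}(u)) ) for suitable integer shifts shift_{ij}, i.e., the Giambelli/Jacobi–Trudi inversion holds for such shifted convolution families. -/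
/-!
Since `T^0 = 1`, the `k = 0` term of the relation at `n` is `T_n(u + n - 1)`, so the relation is a
recursion expressing `T_n` through `T_0, …, T_{n-1}` and `T^1, …, T^n`; this gives uniqueness.
The determinants satisfy the same recursion: expanding along the last column, deleting row `i`
leaves a block-triangular minor whose lower block is unitriangular, so the minor equals the
leading `i × i` determinant.
-/

open Finset Matrix

theorem Matrix.det_eq_det_submatrix_castLE_of_unitriangular_rows
    {R : Type*} [CommRing R] {m k : ℕ} (hk : k ≤ m) (M : Matrix (Fin m) (Fin m) R)
    (hlower : ∀ r c : Fin m, k ≤ (r : ℕ) → c < r → M r c = 0)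
    (hdiag : ∀ r : Fin m, k ≤ (r : ℕ) → M r r = 1) :
    M.det = (M.submatrix (Fin.castLE hk) (Fin.castLE hk)).det := by
  rw [M.twoBlockTriangular_det (fun r => (r : ℕ) < k)
    (fun r hr c hc => hlower r c (not_lt.mp hr) (Fin.lt_def.mpr (by omega)))]
  have htail : (M.toSquareBlockProp fun r => ¬(r : ℕ) < k).det = 1 := by
    refine (det_of_isUpperTriangular fun r c hcr => ?_).trans
      (prod_eq_one fun r _ => hdiag r (not_lt.mp r.2))
    exact hlower r c (not_lt.mp r.2) hcr
  rw [htail, mul_one, ← det_submatrix_equiv_self (Fin.castLEquiv hk)]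
  rfl

section ShiftedOrthogonality

variable {R : Type*} [CommRing R]

def shiftedOrthSum (Ta Tm : ℤ → ℤ → R) (n : ℕ) (u : ℤ) : R :=
  ∑ k ∈ range (n + 1),
    (-1 : R) ^ k * Ta k (u + 2 * n - k - 1) * Tm ((n : ℤ) - k) (u + n - k - 1)

def ShiftedOrthogonal (Ta Tm : ℤ → ℤ → R) : Prop :=
  ∀ n : ℕ, 1 ≤ n → ∀ u : ℤ, shiftedOrthSum Ta Tm n u = 0

def ShiftedRecursive (Ta Tm : ℤ → ℤ → R) : Prop :=
  ∀ m : ℕ, ∀ u : ℤ,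
    Tm ↑(m + 1) u =
      ∑ ij ∈ antidiagonal m, (-1) ^ ij.1 * Ta (ij.1 + 1) (u + ij.2) * Tm ij.2 (u - ij.1 - 1)

variable {Ta Tm : ℤ → ℤ → R}

theorem shiftedOrthSum_succ (hTa0 : ∀ u, Ta 0 u = 1) (m : ℕ) (u : ℤ) :
    shiftedOrthSum Ta Tm (m + 1) u = Tm ↑(m + 1) (u + m) -
      ∑ ij ∈ antidiagonal m,
        (-1) ^ ij.1 * Ta (ij.1 + 1) (u + m + ij.2) * Tm ij.2 (u + m - ij.1 - 1) := by
  rw [shiftedOrthSum, sum_range_succ', Nat.sum_antidiagonal_eq_sum_range_succ_mk, add_comm,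
    sub_eq_add_neg (Tm _ _), ← sum_neg_distrib]
  congr 1
  · rw [Nat.cast_zero, hTa0]
    simp only [pow_zero, one_mul, sub_zero]
    congr 1
    push_cast
    ring
  · refine sum_congr rfl fun k hk => ?_
    have hkm : ((m - k : ℕ) : ℤ) = m - k := Nat.cast_sub (Nat.lt_succ_iff.mp (mem_range.mp hk))
    rw [hkm, pow_succ]
    push_cast
    ring_nf

theorem shiftedOrthogonal_iff_shiftedRecursive (hTa0 : ∀ u, Ta 0 u = 1) :
    ShiftedOrthogonal Ta Tm ↔ ShiftedRecursive Ta Tm := by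
  constructor
  · intro h m u
    have := h (m + 1) le_add_self (u - m)
    rwa [shiftedOrthSum_succ hTa0, sub_add_cancel, sub_eq_zero] at this
  · intro h n hn u
    obtain ⟨m, rfl⟩ := Nat.exists_eq_add_of_le' hn
    rw [shiftedOrthSum_succ hTa0, h, sub_eq_zero]

theorem eq_of_shiftedRecursive {Tm' : ℤ → ℤ → R} (h : ShiftedRecursive Ta Tm)
    (h' : ShiftedRecursive Ta Tm') (h0 : ∀ u, Tm 0 u = Tm' 0 u) :
    ∀ n : ℕ, ∀ u, Tm n u = Tm' n u := by
  intro n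
  induction n using Nat.strong_induction_on with
  | _ n ih =>
    cases n with
    | zero => exact h0
    | succ m =>
      intro u
      rw [h, h']
      refine sum_congr rfl fun ij hij => ?_
      rw [ih ij.2 (Nat.antidiagonal.snd_lt hij)]

end ShiftedOrthogonality

section JacobiTrudi

variable {R : Type*} [CommRing R]

def jacobiTrudiMatrix (Ta : ℤ → ℤ → R) (n : ℕ) (u : ℤ) : Matrix (Fin n) (Fin n) R :=
  of fun i j => Ta (1 + (j : ℤ) - (i : ℤ)) (u + (i : ℤ) + (j : ℤ))

variable {Ta : ℤ → ℤ → R}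

-- Below row `i` the minor is unitriangular: `Ta 0 = 1` and `Ta` vanishes at negative index.
theorem det_jacobiTrudiMatrix_submatrix_succAbove_castSucc
    (hTa0 : ∀ u, Ta 0 u = 1) (hTaneg : ∀ k : ℤ, k < 0 → ∀ u, Ta k u = 0)
    {m : ℕ} (u : ℤ) (i : Fin (m + 1)) :
    ((jacobiTrudiMatrix Ta (m + 1) u).submatrix i.succAbove Fin.castSucc).det =
      (jacobiTrudiMatrix Ta i u).det := by
  have hbelow : ∀ r : Fin m, (i : ℕ) ≤ r → ((i.succAbove r : Fin (m + 1)) : ℕ) = r + 1 :=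
    fun r hr => by rw [Fin.succAbove_of_le_castSucc _ _ (Fin.le_def.mpr hr)]; rfl
  rw [det_eq_det_submatrix_castLE_of_unitriangular_rows (Fin.is_le i)]
  · congr 1
    ext r c
    have hr : i.succAbove (Fin.castLE (Fin.is_le i) r) = Fin.castSucc (Fin.castLE _ r) :=
      Fin.succAbove_of_castSucc_lt _ _ (Fin.lt_def.mpr r.2)
    simp [jacobiTrudiMatrix, hr]
  · intro r c hr hcr
    apply hTaneg
    have := Fin.lt_def.mp hcr
    simp only [Fin.val_castSucc, hbelow r hr]
    omega
  · intro r hr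
    simp only [submatrix_apply, jacobiTrudiMatrix, of_apply, Fin.val_castSucc, hbelow r hr]
    convert hTa0 _ using 2
    push_cast
    ring

theorem det_jacobiTrudiMatrix_succ
    (hTa0 : ∀ u, Ta 0 u = 1) (hTaneg : ∀ k : ℤ, k < 0 → ∀ u, Ta k u = 0)
    (m : ℕ) (u : ℤ) :
    (jacobiTrudiMatrix Ta (m + 1) u).det =
      ∑ ij ∈ antidiagonal m,
        (-1) ^ ij.1 * Ta (ij.1 + 1) (u + m + ij.2) * (jacobiTrudiMatrix Ta ij.2 u).det := by
  set f : ℕ → R := fun j => (-1) ^ (j + m) * Ta (1 + m - j) (u + j + m) *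
    (jacobiTrudiMatrix Ta j u).det
  have hlaplace : (jacobiTrudiMatrix Ta (m + 1) u).det = ∑ j : Fin (m + 1), f j := by
    rw [det_succ_column _ (Fin.last m)]
    refine sum_congr rfl fun j _ => ?_
    rw [Fin.succAbove_last, det_jacobiTrudiMatrix_submatrix_succAbove_castSucc hTa0 hTaneg]
    simp [f, jacobiTrudiMatrix]
  rw [hlaplace, Fin.sum_univ_eq_sum_range f,
    ← Nat.sum_antidiagonal_eq_sum_range_succ fun j _ => f j, ← Nat.sum_antidiagonal_swap]
  refine sum_congr rfl fun ⟨i, j⟩ hij => ?_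
  obtain rfl : i + j = m := mem_antidiagonal.mp hij
  simp only [f, Prod.fst_swap]
  rw [show j + (i + j) = i + 2 * j by ring, pow_add, pow_mul, neg_one_sq, one_pow, mul_one]
  congr 3 <;> push_cast <;> ring

/-- Indexed like `Tm`: `jacobiTrudi Ta n (u + n - 1)` is the `n × n` determinant at `u`.
Negative indices give junk (`Int.toNat`), which the recursion never reads. -/
def jacobiTrudi (Ta : ℤ → ℤ → R) (k v : ℤ) : R :=
  (jacobiTrudiMatrix Ta k.toNat (v - k + 1)).det

theorem shiftedRecursive_jacobiTrudi
    (hTa0 : ∀ u, Ta 0 u = 1) (hTaneg : ∀ k : ℤ, k < 0 → ∀ u, Ta k u = 0) :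
    ShiftedRecursive Ta (jacobiTrudi Ta) := by
  intro m u
  simp only [jacobiTrudi, Int.toNat_natCast]
  rw [det_jacobiTrudiMatrix_succ hTa0 hTaneg]
  refine sum_congr rfl fun ⟨i, j⟩ hij => ?_
  obtain rfl : i + j = m := mem_antidiagonal.mp hij
  push_cast
  ring_nf

end JacobiTrudi

theorem stmt19_general {F : Type*} [Field F] (Ta Tm : ℤ → ℤ → F)
    (hTa0 : ∀ u, Ta 0 u = 1) (hTm0 : ∀ u, Tm 0 u = 1)
    (hTaneg : ∀ k : ℤ, k < 0 → ∀ u, Ta k u = 0)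
    (horth : ∀ n : ℕ, 1 ≤ n → ∀ u : ℤ,
      ∑ k ∈ Finset.range (n + 1),
        (-1 : F) ^ k * Ta k (u + 2 * n - k - 1) * Tm ((n : ℤ) - k) (u + n - k - 1) = 0) :
    (∀ Tm' : ℤ → ℤ → F,
      (∀ u, Tm' 0 u = 1) →
      (∀ k : ℤ, k < 0 → ∀ u, Tm' k u = 0) →
      (∀ n : ℕ, 1 ≤ n → ∀ u : ℤ,
        ∑ k ∈ Finset.range (n + 1),
          (-1 : F) ^ k * Ta k (u + 2 * n - k - 1) * Tm' ((n : ℤ) - k) (u + n - k - 1)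
            = 0) →
      ∀ n : ℕ, ∀ u : ℤ, Tm' n u = Tm n u) ∧
    (∀ n : ℕ, 1 ≤ n → ∀ u : ℤ,
      Tm n (u + n - 1) =
        (Matrix.of fun i j : Fin n =>
          Ta (1 + (j : ℤ) - (i : ℤ)) (u + (i : ℤ) + (j : ℤ))).det) := by
  have hrec : ShiftedRecursive Ta Tm := (shiftedOrthogonal_iff_shiftedRecursive hTa0).1 horth
  refine ⟨fun Tm' hTm'0 _ horth' => ?_, fun n _ u => ?_⟩
  · exact eq_of_shiftedRecursive ((shiftedOrthogonal_iff_shiftedRecursive hTa0).1 horth') hrec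
      fun u => (hTm'0 u).trans (hTm0 u).symm
  · have hdet0 : ∀ u, Tm 0 u = jacobiTrudi Ta 0 u := fun u => (hTm0 u).trans det_fin_zero.symm
    rw [eq_of_shiftedRecursive hrec (shiftedRecursive_jacobiTrudi hTa0 hTaneg) hdet0,
      jacobiTrudi, Int.toNat_natCast, show u + n - 1 - n + 1 = u by ring]
    rfl

/-- if families `T^a, T_m : ℤ → F` with `T^0 = T_0 = 1` and vanishing in
negative index satisfy the shifted convolution identity
`Σ_{k=0}^{n} (-1)^k T^k(u+2n-k-1)·T_{n-k}(u+n-k-1) = 0` for all `n ≥ 1` and `u`, then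
each `T_n` is uniquely determined by `(T^1,…,T^n)`, and the Giambelli/Jacobi–Trudi
inversion holds: `T_n(u+n-1) = det_{1≤i,j≤n}( T^{1+j-i}(u+i+j-2) )`. -/
theorem stmt19 {F : Type*} [Field F] (Ta Tm : ℤ → ℤ → F)
    (hTa0 : ∀ u, Ta 0 u = 1) (hTm0 : ∀ u, Tm 0 u = 1)
    (hTaneg : ∀ k : ℤ, k < 0 → ∀ u, Ta k u = 0)
    (hTmneg : ∀ k : ℤ, k < 0 → ∀ u, Tm k u = 0)
    (horth : ∀ n : ℕ, 1 ≤ n → ∀ u : ℤ,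
      ∑ k ∈ Finset.range (n + 1),
        (-1 : F) ^ k * Ta k (u + 2 * n - k - 1) * Tm ((n : ℤ) - k) (u + n - k - 1) = 0) :
    (∀ Tm' : ℤ → ℤ → F,
      (∀ u, Tm' 0 u = 1) →
      (∀ k : ℤ, k < 0 → ∀ u, Tm' k u = 0) →
      (∀ n : ℕ, 1 ≤ n → ∀ u : ℤ,
        ∑ k ∈ Finset.range (n + 1),
          (-1 : F) ^ k * Ta k (u + 2 * n - k - 1) * Tm' ((n : ℤ) - k) (u + n - k - 1)
            = 0) →
      ∀ n : ℕ, ∀ u : ℤ, Tm' n u = Tm n u) ∧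
    (∀ n : ℕ, 1 ≤ n → ∀ u : ℤ,
      Tm n (u + n - 1) =
        (Matrix.of fun i j : Fin n =>
          Ta (1 + (j : ℤ) - (i : ℤ)) (u + (i : ℤ) + (j : ℤ))).det) :=
  stmt19_general Ta Tm hTa0 hTm0 hTaneg horth
end
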